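/- arXiv:2601.03516 — 4 statements merged into one kernel-verified Lean document; each statement's English description precedes it below -/
import Mathlib

section
/- Let S be a finite set of points in ℝ², let ε > 0, and let Q ⊆ S be an ε-certificate of S. Let (σ₁, σ₂) be a pair of slabs of equal width w covering Q that minimizes w among all equal-width slab pairs covering Q, and let w* be the minimum, over all slab pairs covering S, of the maximum of the two widths. Then the ε-expansions (σ₁', σ₂') of (σ₁, σ₂) cover S and satisfy w(σ₁') = w(σ₂') ≤ (1+ε)·w*. -/
/-!
An optimal equal-width pair for `Q` covers `S` after ε-expansion by the certificate property.
For the width bound, pad the thinner slab of a pair realizing `w*` to width `w*`: this gives an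
equal-width pair covering `S ⊇ Q`, so minimality over `Q` yields `w ≤ w*`.
-/

/-- A slab with unit normal `u`, bounded by the lines `⟪u,x⟫ = a` and `⟪u,x⟫ = b`. -/
def slab (u : EuclideanSpace ℝ (Fin 2)) (a b : ℝ) : Set (EuclideanSpace ℝ (Fin 2)) :=
  {x | (inner ℝ u x : ℝ) ∈ Set.Icc a b}

theorem slab_subset_slab {u : EuclideanSpace ℝ (Fin 2)} {a b a' b' : ℝ} (ha : a' ≤ a)
    (hb : b ≤ b') : slab u a b ⊆ slab u a' b' :=
  fun _ hx => Set.Icc_subset_Icc ha hb hx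

theorem union_slab_subset_union_slab_of_max_width (v₁ v₂ : EuclideanSpace ℝ (Fin 2))
    (c₁ e₁ c₂ e₂ : ℝ) :
    slab v₁ c₁ e₁ ∪ slab v₂ c₂ e₂ ⊆
      slab v₁ c₁ (c₁ + max (e₁ - c₁) (e₂ - c₂)) ∪ slab v₂ c₂ (c₂ + max (e₁ - c₁) (e₂ - c₂)) :=
  Set.union_subset_union
    (slab_subset_slab le_rfl (by linarith [le_max_left (e₁ - c₁) (e₂ - c₂)]))
    (slab_subset_slab le_rfl (by linarith [le_max_right (e₁ - c₁) (e₂ - c₂)]))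

theorem stmt9_general (S : Finset (EuclideanSpace ℝ (Fin 2))) (ε : ℝ) (hε : 0 < ε)
    (Q : Set (EuclideanSpace ℝ (Fin 2))) (hQS : Q ⊆ ↑S)
    (hcert : ∀ (u₁ : EuclideanSpace ℝ (Fin 2)) (a₁ b₁ : ℝ)
        (u₂ : EuclideanSpace ℝ (Fin 2)) (a₂ b₂ : ℝ),
      ‖u₁‖ = 1 → ‖u₂‖ = 1 → b₁ - a₁ = b₂ - a₂ →
      Q ⊆ slab u₁ a₁ b₁ ∪ slab u₂ a₂ b₂ →
      (↑S : Set (EuclideanSpace ℝ (Fin 2))) ⊆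
        slab u₁ (a₁ - ε * (b₁ - a₁) / 2) (b₁ + ε * (b₁ - a₁) / 2) ∪
        slab u₂ (a₂ - ε * (b₂ - a₂) / 2) (b₂ + ε * (b₂ - a₂) / 2))
    (u₁ : EuclideanSpace ℝ (Fin 2)) (a₁ b₁ : ℝ)
    (u₂ : EuclideanSpace ℝ (Fin 2)) (a₂ b₂ : ℝ)
    (hu₁ : ‖u₁‖ = 1) (hu₂ : ‖u₂‖ = 1)
    (heq : b₁ - a₁ = b₂ - a₂)
    (hcovQ : Q ⊆ slab u₁ a₁ b₁ ∪ slab u₂ a₂ b₂)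
    (hmin : ∀ (v₁ : EuclideanSpace ℝ (Fin 2)) (c₁ e₁ : ℝ)
        (v₂ : EuclideanSpace ℝ (Fin 2)) (c₂ e₂ : ℝ),
      ‖v₁‖ = 1 → ‖v₂‖ = 1 → e₁ - c₁ = e₂ - c₂ →
      Q ⊆ slab v₁ c₁ e₁ ∪ slab v₂ c₂ e₂ → b₁ - a₁ ≤ e₁ - c₁)
    (wstar : ℝ)
    (hwstar : IsLeast {w : ℝ | ∃ (v₁ : EuclideanSpace ℝ (Fin 2)) (c₁ e₁ : ℝ)
        (v₂ : EuclideanSpace ℝ (Fin 2)) (c₂ e₂ : ℝ),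
      ‖v₁‖ = 1 ∧ ‖v₂‖ = 1 ∧
      (↑S : Set (EuclideanSpace ℝ (Fin 2))) ⊆ slab v₁ c₁ e₁ ∪ slab v₂ c₂ e₂ ∧
      w = max (e₁ - c₁) (e₂ - c₂)} wstar) :
    (↑S : Set (EuclideanSpace ℝ (Fin 2))) ⊆
      slab u₁ (a₁ - ε * (b₁ - a₁) / 2) (b₁ + ε * (b₁ - a₁) / 2) ∪
      slab u₂ (a₂ - ε * (b₂ - a₂) / 2) (b₂ + ε * (b₂ - a₂) / 2) ∧
    (1 + ε) * (b₁ - a₁) ≤ (1 + ε) * wstar := by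
  refine ⟨hcert u₁ a₁ b₁ u₂ a₂ b₂ hu₁ hu₂ heq hcovQ, ?_⟩
  refine mul_le_mul_of_nonneg_left ?_ (by linarith)
  obtain ⟨⟨v₁, c₁, e₁, v₂, c₂, e₂, hv₁, hv₂, hcovS, rfl⟩, -⟩ := hwstar
  have hcovQ' := (hQS.trans hcovS).trans
    (union_slab_subset_union_slab_of_max_width v₁ v₂ c₁ e₁ c₂ e₂)
  simpa using hmin _ _ _ _ _ _ hv₁ hv₂ (by ring) hcovQ'

/-- Given an ε-certificate `Q` of `S` and an optimal equal-width slab pair for `Q`,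
the ε-expansions cover `S` and have width at most `(1+ε)·w*`. -/
theorem stmt9 (S : Finset (EuclideanSpace ℝ (Fin 2))) (ε : ℝ) (hε : 0 < ε)
    (Q : Set (EuclideanSpace ℝ (Fin 2))) (hQS : Q ⊆ ↑S)
    (hcert : ∀ (u₁ : EuclideanSpace ℝ (Fin 2)) (a₁ b₁ : ℝ)
        (u₂ : EuclideanSpace ℝ (Fin 2)) (a₂ b₂ : ℝ),
      ‖u₁‖ = 1 → ‖u₂‖ = 1 → b₁ - a₁ = b₂ - a₂ →
      Q ⊆ slab u₁ a₁ b₁ ∪ slab u₂ a₂ b₂ →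
      (↑S : Set (EuclideanSpace ℝ (Fin 2))) ⊆
        slab u₁ (a₁ - ε * (b₁ - a₁) / 2) (b₁ + ε * (b₁ - a₁) / 2) ∪
        slab u₂ (a₂ - ε * (b₂ - a₂) / 2) (b₂ + ε * (b₂ - a₂) / 2))
    (u₁ : EuclideanSpace ℝ (Fin 2)) (a₁ b₁ : ℝ)
    (u₂ : EuclideanSpace ℝ (Fin 2)) (a₂ b₂ : ℝ)
    (hu₁ : ‖u₁‖ = 1) (hu₂ : ‖u₂‖ = 1) (hab : a₁ ≤ b₁)
    (heq : b₁ - a₁ = b₂ - a₂)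
    (hcovQ : Q ⊆ slab u₁ a₁ b₁ ∪ slab u₂ a₂ b₂)
    (hmin : ∀ (v₁ : EuclideanSpace ℝ (Fin 2)) (c₁ e₁ : ℝ)
        (v₂ : EuclideanSpace ℝ (Fin 2)) (c₂ e₂ : ℝ),
      ‖v₁‖ = 1 → ‖v₂‖ = 1 → e₁ - c₁ = e₂ - c₂ →
      Q ⊆ slab v₁ c₁ e₁ ∪ slab v₂ c₂ e₂ → b₁ - a₁ ≤ e₁ - c₁)
    (wstar : ℝ)
    (hwstar : IsLeast {w : ℝ | ∃ (v₁ : EuclideanSpace ℝ (Fin 2)) (c₁ e₁ : ℝ)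
        (v₂ : EuclideanSpace ℝ (Fin 2)) (c₂ e₂ : ℝ),
      ‖v₁‖ = 1 ∧ ‖v₂‖ = 1 ∧
      (↑S : Set (EuclideanSpace ℝ (Fin 2))) ⊆ slab v₁ c₁ e₁ ∪ slab v₂ c₂ e₂ ∧
      w = max (e₁ - c₁) (e₂ - c₂)} wstar) :
    (↑S : Set (EuclideanSpace ℝ (Fin 2))) ⊆
      slab u₁ (a₁ - ε * (b₁ - a₁) / 2) (b₁ + ε * (b₁ - a₁) / 2) ∪
      slab u₂ (a₂ - ε * (b₂ - a₂) / 2) (b₂ + ε * (b₂ - a₂) / 2) ∧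
    (1 + ε) * (b₁ - a₁) ≤ (1 + ε) * wstar :=
  stmt9_general S ε hε Q hQS hcert u₁ a₁ b₁ u₂ a₂ b₂ hu₁ hu₂ heq hcovQ hmin wstar hwstar
end

section
/- Let S be a finite set of points in ℝ² not all on one horizontal line and not all on one line of orientation θ. Let p_t, p_b be a highest and a lowest point of S, and p_ℓ, p_r the two extreme points of S in the direction orthogonal to θ. Suppose (σ_h, σ_t) is a pair of slabs covering S, with σ_h horizontal and σ_t of orientation θ, minimizing the maximum width w*. Then there exists an optimal pair (σ_h*, σ_t*) and two distinct points p, q ∈ {p_b, p_t, p_ℓ, p_r} with p ∈ σ_h* and q ∈ σ_t*. -/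
/-- Unit normal of a slab of orientation `γ` (whose bounding lines make angle `γ`
with the x-axis). In particular `dir 0 = (0,1)` is the normal of a horizontal slab. -/
noncomputable def dir (γ : ℝ) : EuclideanSpace ℝ (Fin 2) :=
  (EuclideanSpace.equiv (Fin 2) ℝ).symm ![-(Real.sin γ), Real.cos γ]

open scoped RealInnerProductSpace

local notation "E²" => EuclideanSpace ℝ (Fin 2)

def coverWidths (S : Set E²) (u v : E²) : Set ℝ :=
  {w | ∃ a₁ b₁ a₂ b₂ : ℝ, a₁ ≤ b₁ ∧ a₂ ≤ b₂ ∧ S ⊆ slab u a₁ b₁ ∪ slab v a₂ b₂ ∧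
    w = max (b₁ - a₁) (b₂ - a₂)}

theorem mem_slab_self (u x : E²) : x ∈ slab u ⟪u, x⟫ ⟪u, x⟫ :=
  ⟨le_rfl, le_rfl⟩

theorem subset_slab_of_extremes {S : Set E²} {u p q : E²} {a b : ℝ}
    (hp : ∀ x ∈ S, ⟪u, p⟫ ≤ ⟪u, x⟫) (hq : ∀ x ∈ S, ⟪u, x⟫ ≤ ⟪u, q⟫)
    (hpa : p ∈ slab u a b) (hqb : q ∈ slab u a b) : S ⊆ slab u a b :=
  fun x hx => ⟨hpa.1.trans (hp x hx), (hq x hx).trans hqb.2⟩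

theorem ne_of_extremes_of_not_const {S : Set E²} {u p q : E²}
    (hS : ¬ ∃ c : ℝ, ∀ x ∈ S, ⟪u, x⟫ = c)
    (hp : ∀ x ∈ S, ⟪u, p⟫ ≤ ⟪u, x⟫) (hq : ∀ x ∈ S, ⟪u, x⟫ ≤ ⟪u, q⟫) : p ≠ q := by
  rintro rfl
  exact hS ⟨⟪u, p⟫, fun x hx => le_antisymm (hq x hx) (hp x hx)⟩

theorem exists_mem_right_of_not_mem_left {α : Type*} {S A B : Set α} {p q : α}
    (hcov : S ⊆ A ∪ B) (hp : p ∈ S) (hq : q ∈ S) (hpq : ¬ (p ∈ A ∧ q ∈ A)) :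
    ∃ x ∈ ({p, q} : Set α), x ∉ A ∧ x ∈ B := by
  by_cases hpA : p ∈ A
  · have hqA : q ∉ A := fun hqA => hpq ⟨hpA, hqA⟩
    exact ⟨q, by simp, hqA, (hcov hq).resolve_left hqA⟩
  · exact ⟨p, by simp, hpA, (hcov hp).resolve_left hpA⟩

section OptimalCover

variable {S : Set E²} {u v : E²} {w a₁ b₁ a₂ b₂ : ℝ}

theorem max_width_eq_of_subset_left (hw : IsLeast (coverWidths S u v) w)
    (hopt : w = max (b₁ - a₁) (b₂ - a₂)) (hab : a₁ ≤ b₁) (hS : S ⊆ slab u a₁ b₁) (c : ℝ) :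
    max (b₁ - a₁) (c - c) = w := by
  have hmax : max (b₁ - a₁) (c - c) = b₁ - a₁ := by simp [hab]
  rw [hmax]
  refine le_antisymm (hopt ▸ le_max_left _ _) (hw.2 ⟨a₁, b₁, c, c, hab, le_rfl, ?_, hmax.symm⟩)
  exact hS.trans Set.subset_union_left

theorem max_width_eq_of_subset_right (hw : IsLeast (coverWidths S u v) w)
    (hopt : w = max (b₁ - a₁) (b₂ - a₂)) (hab : a₂ ≤ b₂) (hS : S ⊆ slab v a₂ b₂) (c : ℝ) :
    max (c - c) (b₂ - a₂) = w := by
  have hmax : max (c - c) (b₂ - a₂) = b₂ - a₂ := by simp [hab]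
  rw [hmax]
  refine le_antisymm (hopt ▸ le_max_right _ _) (hw.2 ⟨c, c, a₂, b₂, le_rfl, hab, ?_, hmax.symm⟩)
  exact hS.trans Set.subset_union_right

end OptimalCover

theorem stmt12_general (S : Finset (EuclideanSpace ℝ (Fin 2))) (θ : ℝ)
    (hnotH : ¬ ∃ c : ℝ, ∀ x ∈ S, (inner ℝ (dir 0) x : ℝ) = c)
    (pt pb pl pr : EuclideanSpace ℝ (Fin 2))
    (hpt : pt ∈ S ∧ ∀ x ∈ S, (inner ℝ (dir 0) x : ℝ) ≤ inner ℝ (dir 0) pt)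
    (hpb : pb ∈ S ∧ ∀ x ∈ S, (inner ℝ (dir 0) pb : ℝ) ≤ inner ℝ (dir 0) x)
    (hpr : pr ∈ S ∧ ∀ x ∈ S, (inner ℝ (dir θ) x : ℝ) ≤ inner ℝ (dir θ) pr)
    (hpl : pl ∈ S ∧ ∀ x ∈ S, (inner ℝ (dir θ) pl : ℝ) ≤ inner ℝ (dir θ) x)
    (wstar : ℝ)
    (hwstar : IsLeast {w : ℝ | ∃ a₁ b₁ a₂ b₂ : ℝ, a₁ ≤ b₁ ∧ a₂ ≤ b₂ ∧
      (↑S : Set (EuclideanSpace ℝ (Fin 2))) ⊆ slab (dir 0) a₁ b₁ ∪ slab (dir θ) a₂ b₂ ∧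
      w = max (b₁ - a₁) (b₂ - a₂)} wstar) :
    ∃ a₁ b₁ a₂ b₂ : ℝ, a₁ ≤ b₁ ∧ a₂ ≤ b₂ ∧
      (↑S : Set (EuclideanSpace ℝ (Fin 2))) ⊆ slab (dir 0) a₁ b₁ ∪ slab (dir θ) a₂ b₂ ∧
      max (b₁ - a₁) (b₂ - a₂) = wstar ∧
      ∃ p ∈ ({pb, pt, pl, pr} : Set (EuclideanSpace ℝ (Fin 2))),
        ∃ q ∈ ({pb, pt, pl, pr} : Set (EuclideanSpace ℝ (Fin 2))),
          p ≠ q ∧ p ∈ slab (dir 0) a₁ b₁ ∧ q ∈ slab (dir θ) a₂ b₂ := by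
  obtain ⟨a₁, b₁, a₂, b₂, hab₁, hab₂, hcov, hopt⟩ := hwstar.1
  have hbt : pb ≠ pt := ne_of_extremes_of_not_const hnotH hpb.2 hpt.2
  by_cases hH : (↑S : Set E²) ⊆ slab (dir 0) a₁ b₁
  · obtain ⟨p, hp, hpl⟩ : ∃ p ∈ ({pb, pt} : Set E²), p ≠ pl := by
      by_cases hbl : pb = pl
      · exact ⟨pt, by simp, hbl ▸ hbt.symm⟩
      · exact ⟨pb, by simp, hbl⟩
    refine ⟨a₁, b₁, _, _, hab₁, le_rfl, hH.trans Set.subset_union_left,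
      max_width_eq_of_subset_left hwstar hopt hab₁ hH _, p, ?_, pl, by simp, hpl,
      hH (by rcases hp with rfl | rfl <;> simp [hpb.1, hpt.1]), mem_slab_self _ pl⟩
    rcases hp with rfl | rfl <;> simp
  by_cases hT : (↑S : Set E²) ⊆ slab (dir θ) a₂ b₂
  · exact ⟨_, _, a₂, b₂, le_rfl, hab₂, hT.trans Set.subset_union_right,
      max_width_eq_of_subset_right hwstar hopt hab₂ hT _, pb, by simp, pt, by simp, hbt,
      mem_slab_self _ pb, hT hpt.1⟩
  obtain ⟨q, hq, -, hqT⟩ := exists_mem_right_of_not_mem_left hcov hpb.1 hpt.1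
    fun h => hH (subset_slab_of_extremes hpb.2 hpt.2 h.1 h.2)
  obtain ⟨p, hp, hpT, hpH⟩ := exists_mem_right_of_not_mem_left (Set.union_comm _ _ ▸ hcov)
    hpl.1 hpr.1 fun h => hT (subset_slab_of_extremes hpl.2 hpr.2 h.1 h.2)
  refine ⟨a₁, b₁, a₂, b₂, hab₁, hab₂, hcov, hopt.symm, p, ?_, q, ?_,
    fun hpq => hpT (hpq ▸ hqT), hpH, hqT⟩
  · rcases hp with rfl | rfl <;> simp
  · rcases hq with rfl | rfl <;> simp

/-- For the two-fixed-orientations problem (orientations `0` and `θ`), there exists an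
optimal pair of slabs such that two distinct points among the four extreme points
`p_b, p_t, p_ℓ, p_r` lie one in the horizontal slab and one in the slab of
orientation `θ`. -/
theorem stmt12 (S : Finset (EuclideanSpace ℝ (Fin 2))) (θ : ℝ)
    (hθ0 : 0 < θ) (hθ1 : θ < Real.pi)
    (hnotH : ¬ ∃ c : ℝ, ∀ x ∈ S, (inner ℝ (dir 0) x : ℝ) = c)
    (hnotT : ¬ ∃ c : ℝ, ∀ x ∈ S, (inner ℝ (dir θ) x : ℝ) = c)
    (pt pb pl pr : EuclideanSpace ℝ (Fin 2))
    (hpt : pt ∈ S ∧ ∀ x ∈ S, (inner ℝ (dir 0) x : ℝ) ≤ inner ℝ (dir 0) pt)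
    (hpb : pb ∈ S ∧ ∀ x ∈ S, (inner ℝ (dir 0) pb : ℝ) ≤ inner ℝ (dir 0) x)
    (hpr : pr ∈ S ∧ ∀ x ∈ S, (inner ℝ (dir θ) x : ℝ) ≤ inner ℝ (dir θ) pr)
    (hpl : pl ∈ S ∧ ∀ x ∈ S, (inner ℝ (dir θ) pl : ℝ) ≤ inner ℝ (dir θ) x)
    (wstar : ℝ)
    (hwstar : IsLeast {w : ℝ | ∃ a₁ b₁ a₂ b₂ : ℝ, a₁ ≤ b₁ ∧ a₂ ≤ b₂ ∧
      (↑S : Set (EuclideanSpace ℝ (Fin 2))) ⊆ slab (dir 0) a₁ b₁ ∪ slab (dir θ) a₂ b₂ ∧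
      w = max (b₁ - a₁) (b₂ - a₂)} wstar) :
    ∃ a₁ b₁ a₂ b₂ : ℝ, a₁ ≤ b₁ ∧ a₂ ≤ b₂ ∧
      (↑S : Set (EuclideanSpace ℝ (Fin 2))) ⊆ slab (dir 0) a₁ b₁ ∪ slab (dir θ) a₂ b₂ ∧
      max (b₁ - a₁) (b₂ - a₂) = wstar ∧
      ∃ p ∈ ({pb, pt, pl, pr} : Set (EuclideanSpace ℝ (Fin 2))),
        ∃ q ∈ ({pb, pt, pl, pr} : Set (EuclideanSpace ℝ (Fin 2))),
          p ≠ q ∧ p ∈ slab (dir 0) a₁ b₁ ∧ q ∈ slab (dir θ) a₂ b₂ :=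
  stmt12_general S θ hnotH pt pb pl pr hpt hpb hpr hpl wstar hwstar
end

section
/- Let ℓ_h and ℓ_t be two lines in ℝ² and suppose ℓ_h ⊆ σ_h* and ℓ_t ⊆ σ_t* for slabs σ_h*, σ_t* with widths at most w* that together cover a finite point set S, where σ_h* is parallel to ℓ_h and σ_t* is parallel to ℓ_t. Partition S into H = {p ∈ S : d(p, ℓ_h) < d(p, ℓ_t)} and T = S \ H. Then every p ∈ H satisfies d(p, ℓ_h) ≤ w*, and every p ∈ T satisfies d(p, ℓ_t) ≤ w*. Consequently the minimum slab parallel to ℓ_h enclosing H has width at most 2w*, and the minimum slab parallel to ℓ_t enclosing T has width at most 2w*. -/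
/-- A line with unit normal `u` at offset `c`. -/
def line (u : EuclideanSpace ℝ (Fin 2)) (c : ℝ) : Set (EuclideanSpace ℝ (Fin 2)) :=
  {x | (inner ℝ u x : ℝ) = c}

/-!
For a unit normal `u`, the distance from `p` to the line `⟪u,x⟫ = c` is `|⟪u,p⟫ - c|`. A
line inside a slab of width at most `w*` parallel to it is therefore within `w*` of every point
of the slab. Each point of `S` lies in one of the two slabs, so its distance to the
corresponding line is at most `w*`, and its distance to the nearer line is no larger. The
points within `w*` of a line form a slab of width `2w*` around it.
-/

section Hyperplane

variable {E : Type*} [NormedAddCommGroup E] [InnerProductSpace ℝ E]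

theorem smul_mem_setOf_inner_eq {u : E} (hu : ‖u‖ = 1) (c : ℝ) :
    c • u ∈ {x : E | inner ℝ u x = c} := by
  simp [inner_smul_right, hu]

theorem Metric.infDist_setOf_inner_eq {u : E} (hu : ‖u‖ = 1) (c : ℝ) (p : E) :
    Metric.infDist p {x : E | inner ℝ u x = c} = |inner ℝ u p - c| := by
  apply le_antisymm
  · have hproj : p - (inner ℝ u p - c) • u ∈ {x : E | inner ℝ u x = c} := by
      simp only [Set.mem_ofPred_eq, inner_sub_right, inner_smul_right,
        real_inner_self_eq_norm_sq, hu]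
      ring
    calc Metric.infDist p {x : E | inner ℝ u x = c}
        ≤ dist p (p - (inner ℝ u p - c) • u) := Metric.infDist_le_dist_of_mem hproj
      _ = |inner ℝ u p - c| := by
        rw [dist_eq_norm, sub_sub_cancel, norm_smul, hu, mul_one, Real.norm_eq_abs]
  · refine (Metric.le_infDist ⟨_, smul_mem_setOf_inner_eq hu c⟩).2
      fun y (hy : inner ℝ u y = c) ↦ ?_
    calc |inner ℝ u p - c| = |inner ℝ u (p - y)| := by rw [inner_sub_right, hy]
      _ ≤ ‖u‖ * ‖p - y‖ := abs_real_inner_le_norm u (p - y)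
      _ = dist p y := by rw [hu, one_mul, dist_eq_norm]

end Hyperplane

section Plane

variable {u : EuclideanSpace ℝ (Fin 2)}

theorem infDist_line (hu : ‖u‖ = 1) (c : ℝ) (p : EuclideanSpace ℝ (Fin 2)) :
    Metric.infDist p (line u c) = |inner ℝ u p - c| :=
  Metric.infDist_setOf_inner_eq hu c p

theorem infDist_line_le_iff_mem_slab (hu : ‖u‖ = 1) {c w : ℝ}
    {p : EuclideanSpace ℝ (Fin 2)} :
    Metric.infDist p (line u c) ≤ w ↔ p ∈ slab u (c - w) (c + w) := by
  rw [infDist_line hu, abs_sub_le_iff, slab, Set.mem_ofPred_eq, Set.mem_Icc]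
  constructor <;> rintro ⟨h₁, h₂⟩ <;> constructor <;> linarith

theorem mem_Icc_of_line_subset_slab (hu : ‖u‖ = 1) {c a b : ℝ} (h : line u c ⊆ slab u a b) :
    c ∈ Set.Icc a b := by
  simpa [slab, inner_smul_right, real_inner_self_eq_norm_sq, hu] using
    h (smul_mem_setOf_inner_eq hu c)

theorem infDist_line_le_of_mem_slab (hu : ‖u‖ = 1) {c a b w : ℝ} (hw : b - a ≤ w)
    (hline : line u c ⊆ slab u a b) {p : EuclideanSpace ℝ (Fin 2)} (hp : p ∈ slab u a b) :
    Metric.infDist p (line u c) ≤ w := by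
  have hc := mem_Icc_of_line_subset_slab hu hline
  rw [infDist_line hu, abs_sub_le_iff]
  obtain ⟨hpa, hpb⟩ : inner ℝ u p ∈ Set.Icc a b := hp
  constructor <;> linarith [hc.1, hc.2]

end Plane

/-- Greedy assignment: each point of `S` assigned to the nearer of the two lines is
within distance `w*` of it, so each group fits in a slab of width `2·w*` parallel to its
line. -/
theorem stmt13 (S : Finset (EuclideanSpace ℝ (Fin 2)))
    (u v : EuclideanSpace ℝ (Fin 2)) (hu : ‖u‖ = 1) (hv : ‖v‖ = 1)
    (ch ct a₁ b₁ a₂ b₂ wstar : ℝ)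
    (hwh : b₁ - a₁ ≤ wstar) (hwt : b₂ - a₂ ≤ wstar)
    (hlh : line u ch ⊆ slab u a₁ b₁) (hlt : line v ct ⊆ slab v a₂ b₂)
    (hcover : ↑S ⊆ slab u a₁ b₁ ∪ slab v a₂ b₂) :
    (∀ p ∈ S, Metric.infDist p (line u ch) < Metric.infDist p (line v ct) →
        Metric.infDist p (line u ch) ≤ wstar) ∧
    (∀ p ∈ S, ¬ (Metric.infDist p (line u ch) < Metric.infDist p (line v ct)) →
        Metric.infDist p (line v ct) ≤ wstar) ∧
    (∃ a b : ℝ, b - a ≤ 2 * wstar ∧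
      {p : EuclideanSpace ℝ (Fin 2) | p ∈ S ∧
          Metric.infDist p (line u ch) < Metric.infDist p (line v ct)} ⊆ slab u a b) ∧
    (∃ a b : ℝ, b - a ≤ 2 * wstar ∧
      {p : EuclideanSpace ℝ (Fin 2) | p ∈ S ∧
          ¬ (Metric.infDist p (line u ch) < Metric.infDist p (line v ct))} ⊆ slab v a b) := by
  have hnear : ∀ p ∈ S, Metric.infDist p (line u ch) ≤ wstar ∨
      Metric.infDist p (line v ct) ≤ wstar := fun p hp ↦
    (hcover hp).imp (infDist_line_le_of_mem_slab hu hwh hlh)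
      (infDist_line_le_of_mem_slab hv hwt hlt)
  have hH : ∀ p ∈ S, Metric.infDist p (line u ch) < Metric.infDist p (line v ct) →
      Metric.infDist p (line u ch) ≤ wstar := fun p hp hlt' ↦ by
    rcases hnear p hp with h | h <;> linarith
  have hT : ∀ p ∈ S, ¬ (Metric.infDist p (line u ch) < Metric.infDist p (line v ct)) →
      Metric.infDist p (line v ct) ≤ wstar := fun p hp hnlt ↦ by
    rcases hnear p hp with h | h <;> linarith [not_lt.1 hnlt]
  exact ⟨hH, hT,
    ⟨ch - wstar, ch + wstar, by linarith,
      fun p hp ↦ (infDist_line_le_iff_mem_slab hu).1 (hH p hp.1 hp.2)⟩,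
    ⟨ct - wstar, ct + wstar, by linarith,
      fun p hp ↦ (infDist_line_le_iff_mem_slab hv).1 (hT p hp.1 hp.2)⟩⟩
end

section
/- Let S be a finite set of points in ℝ² with width(S) > 0, and let w* be the minimum, over pairs of parallel slabs whose union covers S, of the maximum of the two widths. Then w* ≤ width(S)/2. Moreover, if (σ₁*, σ₂*) is an optimal pair attaining w* with gap g = g(Σ*) and total extent W(Σ*) = w(σ₁*)+w(σ₂*)+g, then width(S) ≤ W(Σ*) ≤ g + 2w*. -/
theorem slab_subset_union_slab (u : EuclideanSpace ℝ (Fin 2)) (a c b : ℝ) :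
    slab u a b ⊆ slab u a c ∪ slab u c b :=
  fun _ hx => Set.Icc_subset_Icc_union_Icc hx

theorem slab_union_slab_subset (u : EuclideanSpace ℝ (Fin 2)) {a₁ b₁ a₂ b₂ : ℝ}
    (ha : a₁ ≤ a₂) (hb : b₁ ≤ b₂) :
    slab u a₁ b₁ ∪ slab u a₂ b₂ ⊆ slab u a₁ b₂ :=
  Set.union_subset (fun _ hx => Set.Icc_subset_Icc le_rfl hb hx)
    (fun _ hx => Set.Icc_subset_Icc ha le_rfl hx)

theorem stmt18_general (S : Finset (EuclideanSpace ℝ (Fin 2))) (wd wstar : ℝ)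
    (hwd : IsLeast {w : ℝ | ∃ (u : EuclideanSpace ℝ (Fin 2)) (a b : ℝ),
      ‖u‖ = 1 ∧ (↑S : Set (EuclideanSpace ℝ (Fin 2))) ⊆ slab u a b ∧ w = b - a} wd)
    (hws : IsLeast {w : ℝ | ∃ (u : EuclideanSpace ℝ (Fin 2)) (a₁ b₁ a₂ b₂ : ℝ),
      ‖u‖ = 1 ∧ (↑S : Set (EuclideanSpace ℝ (Fin 2))) ⊆ slab u a₁ b₁ ∪ slab u a₂ b₂ ∧
      w = max (b₁ - a₁) (b₂ - a₂)} wstar) :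
    wstar ≤ wd / 2 ∧
    ∀ (u : EuclideanSpace ℝ (Fin 2)) (a₁ b₁ a₂ b₂ : ℝ), ‖u‖ = 1 →
      a₁ ≤ b₁ → b₁ ≤ a₂ → a₂ ≤ b₂ →
      (↑S : Set (EuclideanSpace ℝ (Fin 2))) ⊆ slab u a₁ b₁ ∪ slab u a₂ b₂ →
      max (b₁ - a₁) (b₂ - a₂) = wstar →
      wd ≤ b₂ - a₁ ∧ b₂ - a₁ ≤ (a₂ - b₁) + 2 * wstar := by
  obtain ⟨⟨u, a, b, hu, hS, rfl⟩, hwd_le⟩ := hwd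
  refine ⟨hws.2 ⟨u, a, (a + b) / 2, (a + b) / 2, b, hu,
    hS.trans (slab_subset_union_slab u a _ b), ?_⟩, ?_⟩
  · rw [show (a + b) / 2 - a = (b - a) / 2 by ring, show b - (a + b) / 2 = (b - a) / 2 by ring,
      max_self]
  intro v a₁ b₁ a₂ b₂ hv h₁ h₁₂ h₂ hcov hmax
  have hcov_outer : (↑S : Set _) ⊆ slab v a₁ b₂ :=
    hcov.trans (slab_union_slab_subset v (h₁.trans h₁₂) (h₁₂.trans h₂))
  have hw₁ : b₁ - a₁ ≤ wstar := hmax ▸ le_max_left _ _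
  have hw₂ : b₂ - a₂ ≤ wstar := hmax ▸ le_max_right _ _
  exact ⟨hwd_le ⟨v, a₁, b₂, hv, hcov_outer, rfl⟩, by linarith⟩

/-- `w* ≤ width(S)/2`, and for any optimal pair of (interior-disjoint, ordered) parallel
slabs attaining `w*` with gap `g`, we have `width(S) ≤ W(Σ*) ≤ g + 2·w*`. -/
theorem stmt18 (S : Finset (EuclideanSpace ℝ (Fin 2))) (wd wstar : ℝ)
    (hwd : IsLeast {w : ℝ | ∃ (u : EuclideanSpace ℝ (Fin 2)) (a b : ℝ),
      ‖u‖ = 1 ∧ (↑S : Set (EuclideanSpace ℝ (Fin 2))) ⊆ slab u a b ∧ w = b - a} wd)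
    (hwdpos : 0 < wd)
    (hws : IsLeast {w : ℝ | ∃ (u : EuclideanSpace ℝ (Fin 2)) (a₁ b₁ a₂ b₂ : ℝ),
      ‖u‖ = 1 ∧ (↑S : Set (EuclideanSpace ℝ (Fin 2))) ⊆ slab u a₁ b₁ ∪ slab u a₂ b₂ ∧
      w = max (b₁ - a₁) (b₂ - a₂)} wstar) :
    wstar ≤ wd / 2 ∧
    ∀ (u : EuclideanSpace ℝ (Fin 2)) (a₁ b₁ a₂ b₂ : ℝ), ‖u‖ = 1 →
      a₁ ≤ b₁ → b₁ ≤ a₂ → a₂ ≤ b₂ →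
      (↑S : Set (EuclideanSpace ℝ (Fin 2))) ⊆ slab u a₁ b₁ ∪ slab u a₂ b₂ →
      max (b₁ - a₁) (b₂ - a₂) = wstar →
      wd ≤ b₂ - a₁ ∧ b₂ - a₁ ≤ (a₂ - b₁) + 2 * wstar :=
  stmt18_general S wd wstar hwd hws
end
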